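/- Let d ≥ 0 and r ≥ 0 be integers and let μ1, …, μ10 be nonnegative integers satisfying conditions (A)–(D) (the conditions satisfied by the knot multiplicities of a C^r-smooth simplex spline of degree d on the Powell–Sabin 12-split). If d ≤ ⌈3r/2⌉ (the ceiling of 3r/2), then μ10 = 0. -/

import Mathlib

/-!
Suppose `μ10 = m > 0`. The three medians `{1,5,7,10}`, `{2,6,8,10}`, `{3,4,9,10}` cover all ten
knots and share only the centroid, so their multiplicity sums add up to `d + 3 + 2m`. By (C), a
median carrying a knot other than the centroid has sum at most `d + 1 - r`, and by (D) at least one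
median does. If exactly one does, its sum is `d + 3`; if two do, `d ≥ 2r + 2`; if all three do,
`2m ≤ 2d - 3r ≤ 1`. Each contradicts `d ≤ ⌈3r/2⌉`.
-/

open Finset

theorem AffineIndependent.lt_sum_of_pos {k V P ι : Type*} [Ring k] [Nontrivial k]
    [AddCommGroup V] [Module k V] [AddTorsor V P] [Fintype ι] {p : ι → P} {μ : ι → ℕ} {i j l : ι}
    (hind : AffineIndependent k ![p i, p j, p l]) (hi : 0 < μ i) (hj : 0 < μ j) (c : ι) :
    μ c < ∑ i, μ i := by
  have hij : i ≠ j := fun h ↦ (hind.injective.ne (show (0 : Fin 3) ≠ 1 by decide)) (by simp [h])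
  by_cases hic : i = c
  · exact single_lt_sum (hic ▸ hij.symm) (mem_univ c) (mem_univ j) hj fun _ _ _ ↦ Nat.zero_le _
  · exact single_lt_sum hic (mem_univ c) (mem_univ i) hi fun _ _ _ ↦ Nat.zero_le _

theorem exists_pair_pos_of_lt_sum {ι : Type*} [DecidableEq ι] {μ : ι → ℕ} {L : Finset ι} {c : ι}
    (hcL : c ∈ L) (hc : 0 < μ c) (hlt : μ c < ∑ i ∈ L, μ i) :
    ∃ i ∈ L, ∃ j ∈ L, i ≠ j ∧ 0 < μ i ∧ 0 < μ j := by
  have hrest : 0 < ∑ i ∈ L.erase c, μ i := by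
    have := add_sum_erase L μ hcL
    omega
  obtain ⟨j, hjL, hj⟩ := sum_pos_iff.mp hrest
  exact ⟨c, hcL, j, mem_of_mem_erase hjL, (ne_of_mem_erase hjL).symm, hc, hj⟩

theorem eq_zero_of_median_sums {S₀ S₁ S₂ m d r : ℕ} (hsum : S₀ + S₁ + S₂ = d + 3 + 2 * m)
    (hm : m < d + 3)
    (hle₀ : 0 < m → m < S₀ → (S₀ : ℤ) ≤ d + 1 - r) (hle₁ : 0 < m → m < S₁ → (S₁ : ℤ) ≤ d + 1 - r)
    (hle₂ : 0 < m → m < S₂ → (S₂ : ℤ) ≤ d + 1 - r) (hd : d ≤ (3 * r + 1) / 2) : m = 0 := by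
  omega

/-- Indices are 0-based: `μ i` corresponds to `μ_{i+1}`; `⌈3r/2⌉ = (3r+1)/2` in ℕ. -/
theorem knot_multiplicities_m10
    (p : Fin 10 → ℝ × ℝ)
    (d r : ℕ) (μ : Fin 10 → ℕ)
    (hB : ∑ i, μ i = d + 3)
    (hC : ∀ L ∈ ([{0, 4, 6, 9}, {3, 5, 6}, {1, 5, 7, 9}, {3, 4, 7},
        {2, 3, 8, 9}, {4, 5, 8}] : List (Finset (Fin 10))),
      (∃ i ∈ L, ∃ j ∈ L, i ≠ j ∧ 0 < μ i ∧ 0 < μ j) →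
        (∑ i ∈ L, (μ i : ℤ)) ≤ (d : ℤ) + 1 - (r : ℤ))
    (hD : ∃ i j k : Fin 10, 0 < μ i ∧ 0 < μ j ∧ 0 < μ k ∧
        AffineIndependent ℝ ![p i, p j, p k])
    (hd : d ≤ (3 * r + 1) / 2) :
    μ 9 = 0 := by
  have hmedians : ∑ i ∈ {0, 4, 6, 9}, μ i + ∑ i ∈ {1, 5, 7, 9}, μ i + ∑ i ∈ {2, 3, 8, 9}, μ i =
      d + 3 + 2 * μ 9 := by
    simp only [Fin.isValue, mem_insert, Fin.reduceEq, mem_singleton, or_self, not_false_eq_true,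
      sum_insert, sum_singleton, ← hB, Fin.sum_univ_succ, Fin.succ_zero_eq_one,
      Fin.succ_one_eq_two, Fin.reduceSucc, univ_unique, Fin.default_eq_zero]
    ring
  obtain ⟨i, j, _, hi, hj, -, hind⟩ := hD
  exact eq_zero_of_median_sums hmedians ((hind.lt_sum_of_pos hi hj 9).trans_eq hB)
    (fun hm hlt ↦ by exact_mod_cast hC _ (by simp) (exists_pair_pos_of_lt_sum (by decide) hm hlt))
    (fun hm hlt ↦ by exact_mod_cast hC _ (by simp) (exists_pair_pos_of_lt_sum (by decide) hm hlt))
    (fun hm hlt ↦ by exact_mod_cast hC _ (by simp) (exists_pair_pos_of_lt_sum (by decide) hm hlt))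
    hd
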